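/- Let λ ∈ [0,1) be a constant cooperation strength, W a propagation matrix, and suppose every sub-objective E_i is nonnegative (E_i(x) ≥ 0 for all configurations x). Starting from the initial state Ψ^{(0)}_i ≡ 0 for every i, every iterate defines a valid lower bound function on the objective: for every k ≥ 0 and every configuration x, ∑_{i=1}^n Ψ^{(k)}_i(x_i) ≤ E(x), where Ψ^{(k)} = T_λ(Ψ^{(k−1)}). -/

import Mathlib

open Finset Filter Topology

/-- A propagation matrix: nonnegative entries with unit column sums. -/
def IsPropagationMatrix {n : ℕ} (W : Fin n → Fin n → ℝ) : Prop :=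
  (∀ i j, 0 ≤ W i j) ∧ ∀ j, ∑ i, W i j = 1

/-- The basic cooperative optimization update `T_λ`:
`T_λ(Ψ)_i(a) = min_{x : x_i = a} ((1−λ) E_i(x) + λ ∑_j w_{ij} Ψ_j(x_j))`. -/
noncomputable def coopT {n : ℕ} {D : Fin n → Type} [∀ i, Fintype (D i)]
    [∀ i, Nonempty (D i)]
    (E : Fin n → ((i : Fin n) → D i) → ℝ) (W : Fin n → Fin n → ℝ) (lam : ℝ)
    (Ψ : (i : Fin n) → D i → ℝ) : (i : Fin n) → D i → ℝ :=
  fun i a =>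
    Finset.univ.inf' Finset.univ_nonempty
      (fun x : (j : Fin n) → D j =>
        (1 - lam) * E i (Function.update x i a) +
          lam * ∑ j, W i j * Ψ j (Function.update x i a j))

/-- The total objective `E(x) = ∑ i, E_i(x)`. -/
def objective {n : ℕ} {D : Fin n → Type}
    (E : Fin n → ((i : Fin n) → D i) → ℝ) (x : (i : Fin n) → D i) : ℝ :=
  ∑ i, E i x

/-- `x̃` is a consensus solution with respect to the state `Ψ` and cooperation strength
`lam`: for every `i`, `x̃` globally minimizes the modified sub-objective
`x ↦ (1−λ) E_i(x) + λ ∑_j w_{ij} Ψ_j(x_j)`. -/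
def IsConsensusState {n : ℕ} {D : Fin n → Type}
    (E : Fin n → ((i : Fin n) → D i) → ℝ) (W : Fin n → Fin n → ℝ) (lam : ℝ)
    (Ψ : (i : Fin n) → D i → ℝ) (xt : (i : Fin n) → D i) : Prop :=
  ∀ i, ∀ x : (j : Fin n) → D j,
    (1 - lam) * E i xt + lam * ∑ j, W i j * Ψ j (xt j)
      ≤ (1 - lam) * E i x + lam * ∑ j, W i j * Ψ j (x j)

theorem Finset.sum_sum_mul_eq_of_sum_col_eq_one {ι : Type*} [Fintype ι] (W : ι → ι → ℝ)
    (hW : ∀ j, ∑ i, W i j = 1) (f : ι → ℝ) :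
    ∑ i, ∑ j, W i j * f j = ∑ j, f j := by
  rw [sum_comm]
  refine sum_congr rfl fun j _ => ?_
  rw [← sum_mul, hW j, one_mul]

section CooperativeOptimization

variable {n : ℕ} {D : Fin n → Type}

def IsLowerBoundState (E : Fin n → ((i : Fin n) → D i) → ℝ) (Ψ : (i : Fin n) → D i → ℝ) :
    Prop :=
  ∀ x : (i : Fin n) → D i, ∑ i, Ψ i (x i) ≤ objective E x

theorem isLowerBoundState_zero {E : Fin n → ((i : Fin n) → D i) → ℝ}
    (hE : ∀ i x, 0 ≤ E i x) : IsLowerBoundState E fun _ _ => 0 := fun x => by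
  simpa only [sum_const_zero, objective] using sum_nonneg fun i _ => hE i x

theorem coopT_apply_le [∀ i, Fintype (D i)] [∀ i, Nonempty (D i)]
    (E : Fin n → ((i : Fin n) → D i) → ℝ) (W : Fin n → Fin n → ℝ) (lam : ℝ)
    (Ψ : (i : Fin n) → D i → ℝ) (i : Fin n) (x : (j : Fin n) → D j) :
    coopT E W lam Ψ i (x i) ≤ (1 - lam) * E i x + lam * ∑ j, W i j * Ψ j (x j) := by
  refine (inf'_le _ (mem_univ x)).trans_eq ?_
  simp only [Function.update_eq_self]

/-- Summing `coopT_apply_le` over `i`, the unit column sums of `W` collapse the propagated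
terms to `λ ∑ j, Ψ_j(x_j)`, a convex combination of the objective and the old bound. -/
theorem IsLowerBoundState.coopT [∀ i, Fintype (D i)] [∀ i, Nonempty (D i)]
    {E : Fin n → ((i : Fin n) → D i) → ℝ} {W : Fin n → Fin n → ℝ}
    (hW : ∀ j, ∑ i, W i j = 1) {lam : ℝ} (hlam : 0 ≤ lam)
    {Ψ : (i : Fin n) → D i → ℝ} (hΨ : IsLowerBoundState E Ψ) :
    IsLowerBoundState E (_root_.coopT E W lam Ψ) := fun x =>
  calc ∑ i, _root_.coopT E W lam Ψ i (x i)
      ≤ ∑ i, ((1 - lam) * E i x + lam * ∑ j, W i j * Ψ j (x j)) :=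
        sum_le_sum fun i _ => coopT_apply_le E W lam Ψ i x
    _ = (1 - lam) * objective E x + lam * ∑ j, Ψ j (x j) := by
        rw [sum_add_distrib, ← mul_sum, ← mul_sum,
          Finset.sum_sum_mul_eq_of_sum_col_eq_one W hW, objective]
    _ ≤ (1 - lam) * objective E x + lam * objective E x := by gcongr; exact hΨ x
    _ = objective E x := by ring

end CooperativeOptimization

theorem iterates_are_lower_bounds_general (n : ℕ) (D : Fin n → Type)
    [∀ i, Fintype (D i)] [∀ i, Nonempty (D i)]
    (E : Fin n → ((i : Fin n) → D i) → ℝ)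
    (hE : ∀ i (x : (j : Fin n) → D j), 0 ≤ E i x)
    (W : Fin n → Fin n → ℝ) (hW : IsPropagationMatrix W)
    (lam : ℝ) (hlam0 : 0 ≤ lam)
    (Psi : ℕ → (i : Fin n) → D i → ℝ)
    (hinit : ∀ i (a : D i), Psi 0 i a = 0)
    (hstep : ∀ k, Psi (k + 1) = coopT E W lam (Psi k)) :
    ∀ (k : ℕ) (x : (i : Fin n) → D i), ∑ i, Psi k i (x i) ≤ objective E x := by
  intro k
  induction k with
  | zero =>
    have hzero : Psi 0 = fun _ _ => 0 := funext fun i => funext (hinit i)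
    exact hzero ▸ isLowerBoundState_zero hE
  | succ k ih => exact hstep k ▸ IsLowerBoundState.coopT hW.2 hlam0 ih

/-- With nonnegative sub-objectives and the zero initial state, every
iterate of `T_λ` defines a valid lower bound function on the objective. -/
theorem iterates_are_lower_bounds (n : ℕ) (hn : 1 ≤ n) (D : Fin n → Type)
    [∀ i, Fintype (D i)] [∀ i, Nonempty (D i)]
    (E : Fin n → ((i : Fin n) → D i) → ℝ)
    (hE : ∀ i (x : (j : Fin n) → D j), 0 ≤ E i x)
    (W : Fin n → Fin n → ℝ) (hW : IsPropagationMatrix W)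
    (lam : ℝ) (hlam0 : 0 ≤ lam) (hlam1 : lam < 1)
    (Psi : ℕ → (i : Fin n) → D i → ℝ)
    (hinit : ∀ i (a : D i), Psi 0 i a = 0)
    (hstep : ∀ k, Psi (k + 1) = coopT E W lam (Psi k)) :
    ∀ (k : ℕ) (x : (i : Fin n) → D i), ∑ i, Psi k i (x i) ≤ objective E x :=
  iterates_are_lower_bounds_general n D E hE W hW lam hlam0 Psi hinit hstep
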